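/- With the q-deformed Cartan–Weyl Jordan–Schwinger generators E_{ij} (as built from E^J_{ij} = (x_i/x_j)[N_j] with the q-power dressing factors), for i > j > k one has [E_{ij}, E_{jk}]_{q^{−1}} := E_{ij}E_{jk} − q^{−1} E_{jk}E_{ij} = E_{ik}. -/

import Mathlib

/-!
Write `[N] = (q^N - q^{-N}) / (q - q⁻¹)`, so that `E_{ij} = q^{N_{j+1}+⋯+N_{i-1}} x_i x_j⁻¹ [N_j]`
for `j < i`. The dressing factors commute with everything standing next to them, and the only
nontrivial exchange is `[N_j] x_j = x_j [N_j + 1]`, coming from `q^{N_j} x_j = q x_j q^{N_j}`.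
Hence `E_{ij} E_{jk}` and `E_{jk} E_{ij}` both reduce to
`q^{N_{(k,j)}} q^{N_{(j,i)}} x_i x_k⁻¹ X [N_k]`, with `X = [N_j + 1]` and `X = [N_j]` respectively,
while splitting the interval `(k, i)` at `j` gives the same shape for `E_{ik}` with `X = q^{N_j}`.
The identity `[N + 1] - q⁻¹ [N] = q^N` finishes the proof.
-/

open Finset

section FinsetProd

variable {M ι : Type*} [Monoid M]

structure IsFinsetProd [DecidableEq ι] (f : ι → Mˣ) (F : Finset ι → Mˣ) : Prop where
  map_empty : F ∅ = 1
  map_insert : ∀ s t, t ∉ s → F (insert t s) = f t * F s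

namespace IsFinsetProd

variable [DecidableEq ι] {f : ι → Mˣ} {F : Finset ι → Mˣ}

theorem commute_left (hF : IsFinsetProd f F) {s : Finset ι} {y : M}
    (h : ∀ t ∈ s, Commute (f t : M) y) : Commute (F s : M) y := by
  induction s using Finset.induction_on with
  | empty => simp [hF.map_empty]
  | insert t s ht ih =>
    rw [hF.map_insert s t ht, Units.val_mul]
    exact (h t (mem_insert_self t s)).mul_left (ih fun u hu => h u (mem_insert_of_mem hu))

theorem union (hF : IsFinsetProd f F) {s t : Finset ι} (hst : Disjoint s t) :
    F (s ∪ t) = F s * F t := by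
  induction s using Finset.induction_on with
  | empty => simp [hF.map_empty]
  | insert a s ha ih =>
    rw [disjoint_insert_left] at hst
    rw [insert_union, hF.map_insert _ _ (by simp [ha, hst.1]), ih hst.2, hF.map_insert s a ha,
      mul_assoc]

end IsFinsetProd

theorem Finset.Ioo_eq_union_insert_Ioo {α : Type*} [LinearOrder α] [LocallyFiniteOrder α]
    {a b c : α} (hab : a < b) (hbc : b < c) :
    Ioo a c = Ioo a b ∪ insert b (Ioo b c) := by
  ext t
  simp only [mem_Ioo, mem_union, mem_insert]
  grind

theorem IsFinsetProd.Ioo_eq {α : Type*} [LinearOrder α] [LocallyFiniteOrder α]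
    {f : α → Mˣ} {F : Finset α → Mˣ} (hF : IsFinsetProd f F) {a b c : α}
    (hab : a < b) (hbc : b < c) :
    F (Ioo a c) = F (Ioo a b) * (f b * F (Ioo b c)) := by
  have hdisj : Disjoint (Ioo a b) (insert b (Ioo b c)) := by
    rw [Ioo_insert_left hbc]
    exact (Ico_disjoint_Ico_consecutive a b c).mono_left Ioo_subset_Ico_self
  rw [Ioo_eq_union_insert_Ioo hab hbc, hF.union hdisj, hF.map_insert _ _ (by simp)]

end FinsetProd

section QNumber

variable {A : Type*} [Ring A]

/-- The q-number `[N] = (q^N - q^{-N}) / (q - q⁻¹)`, with `u` standing for `q^N` and `lamInv`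
for `(q - q⁻¹)⁻¹`. -/
def qNum (lamInv : A) (u : Aˣ) : A := lamInv * (u - ↑u⁻¹)

theorem Commute.qNum_left {lamInv y : A} {u : Aˣ} (hl : Commute lamInv y)
    (hu : Commute (u : A) y) : Commute (qNum lamInv u) y :=
  hl.mul_left (hu.sub_left hu.units_inv_left)

theorem Units.inv_mul_eq_of_mul_eq {M : Type*} [Monoid M] {u c : Mˣ} {y : M}
    (hc : Commute (c : M) u) (h : (u : M) * y = c * (y * u)) :
    ↑u⁻¹ * y = ↑c⁻¹ * (y * ↑u⁻¹) := by
  rw [Units.inv_mul_eq_iff_eq_mul, ← hc.units_inv_left.left_comm, ← mul_assoc (u : M) y, h,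
    mul_assoc (c : M), Units.mul_inv_cancel_right, Units.inv_mul_cancel_left]

theorem qNum_mul_of_mul_eq {q u : Aˣ} {lamInv y : A} (hq : ∀ a, Commute (q : A) a)
    (hl : Commute lamInv y) (h : (u : A) * y = q * (y * u)) :
    qNum lamInv u * y = y * qNum lamInv (q * u) := by
  have hinv := Units.inv_mul_eq_of_mul_eq (hq u) h
  rw [qNum, qNum, mul_assoc, sub_mul, h, hinv, Units.val_mul, mul_inv_rev, Units.val_mul,
    (hq y).left_comm, (hq y).units_inv_left.left_comm, ← mul_sub, hl.left_comm,
    (hq u).units_inv_left.units_inv_right.eq]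

theorem qNum_q_mul_sub {q u : Aˣ} {lamInv : A} (hq : ∀ a, Commute (q : A) a)
    (hl : Commute lamInv ↑q⁻¹) (hlam : lamInv * (q - ↑q⁻¹) = 1) :
    qNum lamInv (q * u) - ↑q⁻¹ * qNum lamInv u = u := by
  have hqu : (↑u⁻¹ : A) * ↑q⁻¹ = ↑q⁻¹ * ↑u⁻¹ := (hq _).units_inv_left.eq.symm
  calc qNum lamInv (q * u) - ↑q⁻¹ * qNum lamInv u
      = lamInv * (q - ↑q⁻¹) * u := by
        rw [qNum, qNum, Units.val_mul, mul_inv_rev, Units.val_mul, hqu, ← mul_assoc,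
          ← hl.eq]
        noncomm_ring
    _ = u := by rw [hlam, one_mul]

end QNumber

section Oscillator

variable {A ι : Type*} [Ring A]

/-- `qN i` stands for `q^{N_i}`, where `N_i` is the number operator of the coordinate `x i`. -/
structure QOscillator (q : Aˣ) (lamInv : A) (x qN : ι → Aˣ) : Prop where
  q_central : ∀ a : A, Commute (q : A) a
  lamInv_central : ∀ a : A, Commute lamInv a
  lamInv_mul : lamInv * (q - ↑q⁻¹) = 1
  commute_x : ∀ i j, Commute (x i : A) (x j)
  commute_qN : ∀ i j, Commute (qN i : A) (qN j)
  qN_mul_x_self : ∀ i, (qN i : A) * x i = q * (x i * qN i)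
  commute_qN_x : ∀ i j, i ≠ j → Commute (qN i : A) (x j)

def lowerGenerator [Preorder ι] [LocallyFiniteOrder ι] (lamInv : A) (x qN : ι → Aˣ)
    (qS : Finset ι → Aˣ) (i j : ι) : A :=
  qS (Ioo j i) * (x i * ↑(x j)⁻¹ * qNum lamInv (qN j))

namespace QOscillator

variable {q : Aˣ} {lamInv : A} {x qN : ι → Aˣ}

theorem commute_qNum_x (h : QOscillator q lamInv x qN) {i j : ι} (hij : i ≠ j) :
    Commute (qNum lamInv (qN i)) (x j) :=
  (h.lamInv_central _).qNum_left (h.commute_qN_x i j hij)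

theorem commute_qNum_qNum (h : QOscillator q lamInv x qN) (i j : ι) :
    Commute (qNum lamInv (qN i)) (qNum lamInv (qN j)) :=
  (h.lamInv_central _).qNum_left ((h.lamInv_central _).qNum_left (h.commute_qN j i)).symm

variable [DecidableEq ι] {qS : Finset ι → Aˣ}

theorem commute_qS_x (h : QOscillator q lamInv x qN) (hS : IsFinsetProd qN qS)
    {s : Finset ι} {i : ι} (hi : i ∉ s) : Commute (qS s : A) (x i) :=
  hS.commute_left fun t ht => h.commute_qN_x t i (ne_of_mem_of_not_mem ht hi)

theorem commute_qS_qN (h : QOscillator q lamInv x qN) (hS : IsFinsetProd qN qS)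
    (s : Finset ι) (i : ι) : Commute (qS s : A) (qN i) :=
  hS.commute_left fun t _ => h.commute_qN t i

theorem commute_qS_qNum (h : QOscillator q lamInv x qN) (hS : IsFinsetProd qN qS)
    (s : Finset ι) (i : ι) : Commute (qS s : A) (qNum lamInv (qN i)) :=
  ((h.lamInv_central _).qNum_left (h.commute_qS_qN hS s i).symm).symm

theorem commute_qS_qS (h : QOscillator q lamInv x qN) (hS : IsFinsetProd qN qS)
    (s t : Finset ι) : Commute (qS s : A) (qS t) :=
  hS.commute_left fun u _ => (h.commute_qS_qN hS t u).symm

end QOscillator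

section Ordered

variable [LinearOrder ι] [LocallyFiniteOrder ι] {q : Aˣ} {lamInv : A} {x qN : ι → Aˣ}
  {qS : Finset ι → Aˣ}

namespace QOscillator

theorem lowerGenerator_mul_lowerGenerator (h : QOscillator q lamInv x qN)
    (hS : IsFinsetProd qN qS) {i j k : ι} (hij : j < i) (hjk : k < j) :
    lowerGenerator lamInv x qN qS i j * lowerGenerator lamInv x qN qS j k
      = qS (Ioo j i) * (qS (Ioo k j) * (x i * (↑(x k)⁻¹
          * (qNum lamInv (q * qN j) * qNum lamInv (qN k))))) := by
  have hj : j ∉ Ioo k j := by simp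
  have hi : i ∉ Ioo k j := fun hi => (mem_Ioo.mp hi).2.asymm hij
  have hshift := qNum_mul_of_mul_eq h.q_central (h.lamInv_central _) (h.qN_mul_x_self j)
  have hcomm : Commute (qNum lamInv (q * qN j)) ↑(x k)⁻¹ := by
    refine ((h.lamInv_central _).qNum_left ?_).units_inv_right
    rw [Units.val_mul]
    exact (h.q_central _).mul_left (h.commute_qN_x j k hjk.ne')
  simp only [lowerGenerator, mul_assoc]
  rw [(h.commute_qS_qNum hS _ j).symm.left_comm,
    (h.commute_qS_x hS hj).units_inv_right.symm.left_comm,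
    (h.commute_qS_x hS hi).symm.left_comm, ← mul_assoc (qNum lamInv (qN j)), hshift, mul_assoc,
    Units.inv_mul_cancel_left, hcomm.left_comm]

theorem lowerGenerator_mul_lowerGenerator_rev (h : QOscillator q lamInv x qN)
    (hS : IsFinsetProd qN qS) {i j k : ι} (hij : j < i) (hjk : k < j) :
    lowerGenerator lamInv x qN qS j k * lowerGenerator lamInv x qN qS i j
      = qS (Ioo j i) * (qS (Ioo k j) * (x i * (↑(x k)⁻¹
          * (qNum lamInv (qN j) * qNum lamInv (qN k))))) := by
  have hj : j ∉ Ioo j i := by simp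
  have hk : k ∉ Ioo j i := fun hk => (mem_Ioo.mp hk).1.asymm hjk
  simp only [lowerGenerator, mul_assoc]
  rw [(h.commute_qS_qNum hS _ k).symm.left_comm,
    (h.commute_qS_x hS hk).units_inv_right.symm.left_comm,
    (h.commute_qS_x hS hj).symm.left_comm, (h.commute_qS_qS hS _ _).symm.left_comm,
    (h.commute_qNum_x (hjk.trans hij).ne).left_comm,
    (h.commute_qNum_x hjk.ne).units_inv_right.left_comm, (h.commute_qNum_qNum k j).eq,
    (h.commute_x k i).units_inv_left.left_comm,
    (h.commute_x k j).units_inv_left.units_inv_right.left_comm,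
    (h.commute_x i j).units_inv_right.left_comm, Units.mul_inv_cancel_left]

theorem lowerGenerator_eq_of_lt_of_lt (h : QOscillator q lamInv x qN)
    (hS : IsFinsetProd qN qS) {i j k : ι} (hij : j < i) (hjk : k < j) :
    lowerGenerator lamInv x qN qS i k
      = qS (Ioo j i) * (qS (Ioo k j) * (x i * (↑(x k)⁻¹ * (qN j * qNum lamInv (qN k))))) := by
  simp only [lowerGenerator, hS.Ioo_eq hjk hij, Units.val_mul, mul_assoc]
  rw [(h.commute_qS_qN hS _ j).symm.left_comm, (h.commute_qS_qS hS _ _).symm.left_comm,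
    (h.commute_qN_x j i hij.ne).left_comm,
    (h.commute_qN_x j k hjk.ne').units_inv_right.left_comm]

theorem lowerGenerator_qCommutator (h : QOscillator q lamInv x qN)
    (hS : IsFinsetProd qN qS) {i j k : ι} (hij : j < i) (hjk : k < j) :
    lowerGenerator lamInv x qN qS i j * lowerGenerator lamInv x qN qS j k
        - ↑q⁻¹ * (lowerGenerator lamInv x qN qS j k * lowerGenerator lamInv x qN qS i j)
      = lowerGenerator lamInv x qN qS i k := by
  have hq : ∀ a : A, Commute (↑q⁻¹ : A) a := fun a => (h.q_central a).units_inv_left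
  rw [h.lowerGenerator_mul_lowerGenerator hS hij hjk,
    h.lowerGenerator_mul_lowerGenerator_rev hS hij hjk, h.lowerGenerator_eq_of_lt_of_lt hS hij hjk,
    (hq _).left_comm, (hq _).left_comm, (hq _).left_comm, (hq _).left_comm,
    ← mul_assoc (↑q⁻¹ : A), ← mul_sub, ← mul_sub, ← mul_sub, ← mul_sub, ← sub_mul,
    qNum_q_mul_sub h.q_central (h.lamInv_central _) h.lamInv_mul]

end QOscillator

end Ordered

end Oscillator

theorem stmt_5_general {A : Type*} [Ring A] (n : ℕ)
    (q : Aˣ) (lamInv : A)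
    (x qN : Fin (n + 1) → Aˣ)
    (qS : Finset (Fin (n + 1)) → Aˣ)
    (hq_central : ∀ a : A, (q : A) * a = a * (q : A))
    (hlam_central : ∀ a : A, lamInv * a = a * lamInv)
    (hlam : lamInv * ((q : A) - ((q⁻¹ : Aˣ) : A)) = 1)
    (hxx : ∀ i j, (x i : A) * (x j : A) = (x j : A) * (x i : A))
    (hNN : ∀ i j, (qN i : A) * (qN j : A) = (qN j : A) * (qN i : A))
    (hNx : ∀ i j, (qN i : A) * (x j : A)
      = (if i = j then (q : A) else 1) * ((x j : A) * (qN i : A)))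
    (hqS0 : qS ∅ = 1)
    (hqSi : ∀ (s : Finset (Fin (n + 1))) (t), t ∉ s → qS (insert t s) = qN t * qS s)
    (EJ E : Fin (n + 1) → Fin (n + 1) → A)
    (hEJ : ∀ i j, EJ i j
      = (x i : A) * (((x j)⁻¹ : Aˣ) : A)
          * (lamInv * ((qN j : A) - (((qN j)⁻¹ : Aˣ) : A))))
    (hEgt : ∀ i j, j < i →
      E i j = ((qS (Finset.Ioo j i) : Aˣ) : A) * EJ i j)
    (i j k : Fin (n + 1)) (hij : j < i) (hjk : k < j) :
    E i j * E j k - ((q⁻¹ : Aˣ) : A) * (E j k * E i j) = E i k := by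
  have h : QOscillator q lamInv x qN :=
    { q_central := hq_central
      lamInv_central := hlam_central
      lamInv_mul := hlam
      commute_x := hxx
      commute_qN := hNN
      qN_mul_x_self := fun i => by simpa using hNx i i
      commute_qN_x := fun i j hij =>
        (by simpa [hij] using hNx i j : (qN i : A) * x j = x j * qN i) }
  have hE : ∀ a b, b < a → E a b = lowerGenerator lamInv x qN qS a b := fun a b hab => by
    rw [hEgt a b hab, hEJ]; rfl
  rw [hE i j hij, hE j k hjk, hE i k (hjk.trans hij)]
  exact h.lowerGenerator_qCommutator ⟨hqS0, hqSi⟩ hij hjk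

/-- q-deformed Cartan–Weyl Jordan–Schwinger generators:
`E_{ij} = q^{−(N_{i+1}+⋯+N_{j−1})} E^J_{ij}` for `i<j`,
`E_{ij} = q^{+(N_{i−1}+⋯+N_{j+1})} E^J_{ij}` for `i>j`, with
`E^J_{ij} = (x_i/x_j)[N_j]`. The unit `qS s` represents `q^{∑_{t∈s} N_t}`. -/
theorem stmt_5 {A : Type*} [Ring A] (n : ℕ)
    (q : Aˣ) (lamInv : A)
    (x qN : Fin (n + 1) → Aˣ)
    (qS : Finset (Fin (n + 1)) → Aˣ)
    (hq_central : ∀ a : A, (q : A) * a = a * (q : A))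
    (hlam_central : ∀ a : A, lamInv * a = a * lamInv)
    (hlam : lamInv * ((q : A) - ((q⁻¹ : Aˣ) : A)) = 1)
    (hxx : ∀ i j, (x i : A) * (x j : A) = (x j : A) * (x i : A))
    (hNN : ∀ i j, (qN i : A) * (qN j : A) = (qN j : A) * (qN i : A))
    (hNx : ∀ i j, (qN i : A) * (x j : A)
      = (if i = j then (q : A) else 1) * ((x j : A) * (qN i : A)))
    (hqS0 : qS ∅ = 1)
    (hqSi : ∀ (s : Finset (Fin (n + 1))) (t), t ∉ s → qS (insert t s) = qN t * qS s)
    (EJ E : Fin (n + 1) → Fin (n + 1) → A)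
    (hEJ : ∀ i j, EJ i j
      = (x i : A) * (((x j)⁻¹ : Aˣ) : A)
          * (lamInv * ((qN j : A) - (((qN j)⁻¹ : Aˣ) : A))))
    (hElt : ∀ i j, i < j →
      E i j = (((qS (Finset.Ioo i j))⁻¹ : Aˣ) : A) * EJ i j)
    (hEgt : ∀ i j, j < i →
      E i j = ((qS (Finset.Ioo j i) : Aˣ) : A) * EJ i j)
    (i j k : Fin (n + 1)) (hij : j < i) (hjk : k < j) :
    E i j * E j k - ((q⁻¹ : Aˣ) : A) * (E j k * E i j) = E i k :=
  stmt_5_general n q lamInv x qN qS hq_central hlam_central hlam hxx hNN hNx hqS0 hqSi EJ E hEJ hEgt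
    i j k hij hjk
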